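/- Let D_F := D + iB be a closed operator where D is self-adjoint with D² ≥ 1 and B is a bounded self-adjoint operator with ‖B‖ ≤ a < 1, such that (D + iB)*(D + iB) ≥ (1 − a²)·1 and similarly for the adjoint. Then for every y ∈ ℝ, iy belongs to the resolvent set of D + iB and ‖(D + iB − iy)^{-1}‖ ≤ √6 / ((1 − a²) √(1 + y²)). -/

import Mathlib

/-!
Since `D` is symmetric, `‖(D - iy)ψ‖² = ‖Dψ‖² + y²‖ψ‖² ≥ (1 + y²)‖ψ‖²`, so after the perturbation
`iB` of norm at most `a` the operator `D + iB - iy` is still bounded below by `c = √(1 + y²) - a > 0`,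
and so is its adjoint `D - iB + iy`. A closed operator that is bounded below has closed range; the
orthogonal complement of that range is the kernel of the adjoint, hence trivial. So `D + iB - iy`
maps its domain bijectively onto `H`, with inverse of norm at most
`1 / c ≤ √6 / ((1 - a²) √(1 + y²))`.
-/

namespace LinearPMap

section Normed

variable {𝕜 E F : Type*} [RCLike 𝕜] [NormedAddCommGroup E] [NormedSpace 𝕜 E]
  [NormedAddCommGroup F] [NormedSpace 𝕜 F]

theorem IsClosed.vadd {T : E →ₗ.[𝕜] F} (hT : T.IsClosed) (L : E →L[𝕜] F) :
    ((L : E →ₗ[𝕜] F) +ᵥ T).IsClosed := by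
  have hgraph : (((L : E →ₗ[𝕜] F) +ᵥ T).graph : Set (E × F)) =
      (fun p : E × F ↦ (p.1, p.2 - L p.1)) ⁻¹' T.graph := by
    ext ⟨x, z⟩
    simp only [SetLike.mem_coe, Set.mem_preimage, mem_graph_iff, vadd_apply]
    constructor
    · rintro ⟨y, rfl, rfl⟩
      exact ⟨y, rfl, by simp⟩
    · rintro ⟨y, rfl, h⟩
      exact ⟨y, rfl, by simp [h]⟩
  unfold LinearPMap.IsClosed
  rw [hgraph]
  exact hT.preimage (by fun_prop)

theorem IsClosed.isClosed_range [CompleteSpace E] [CompleteSpace F] {T : E →ₗ.[𝕜] F}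
    (hT : T.IsClosed) {c : ℝ} (hc : 0 < c) (hbdd : ∀ x : T.domain, c * ‖(x : E)‖ ≤ ‖T x‖) :
    _root_.IsClosed (Set.range T) := by
  have : CompleteSpace T.graph := hT.completeSpace_coe
  let π : T.graph →L[𝕜] F := (ContinuousLinearMap.snd 𝕜 E F).comp T.graph.subtypeL
  have hrange : Set.range π = Set.range T := by
    ext z
    simp [π, mem_graph_iff]
  have hanti : AntilipschitzWith ⟨c⁻¹ + 1, by positivity⟩ π := by
    refine AddMonoidHomClass.antilipschitz_of_bound π fun p ↦ ?_
    obtain ⟨⟨u, z⟩, hp⟩ := p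
    obtain ⟨x, rfl, rfl⟩ := (mem_graph_iff T).1 hp
    have hx : ‖(x : E)‖ ≤ c⁻¹ * ‖T x‖ := (le_inv_mul_iff₀ hc).2 (hbdd x)
    change ‖((x : E), T x)‖ ≤ (c⁻¹ + 1) * ‖T x‖
    rw [add_one_mul]
    exact norm_prod_le_iff.2 ⟨hx.trans (le_add_of_nonneg_right (norm_nonneg _)),
      le_add_of_nonneg_left (by positivity)⟩
  rw [← hrange]
  exact hanti.isClosed_range π.uniformContinuous

theorem exists_inverse_of_surjective {T : E →ₗ.[𝕜] F} (hsurj : Function.Surjective T)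
    {c : ℝ} (hc : 0 < c) (hbdd : ∀ x : T.domain, c * ‖(x : E)‖ ≤ ‖T x‖) :
    ∃ R : F →L[𝕜] E, (∀ x : T.domain, R (T x) = x) ∧
      (∀ z : F, ∃ h : R z ∈ T.domain, T ⟨R z, h⟩ = z) ∧ ‖R‖ ≤ c⁻¹ := by
  have hinj : Function.Injective T := by
    refine (injective_iff_map_eq_zero T.toFun).2 fun x hx ↦ ?_
    have := hbdd x
    rw [show T x = 0 from hx, norm_zero] at this
    exact Subtype.ext (norm_le_zero_iff.1 (nonpos_of_mul_nonpos_right this hc))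
  let e := LinearEquiv.ofBijective T.toFun ⟨hinj, hsurj⟩
  let R : F →ₗ[𝕜] E := T.domain.subtype ∘ₗ e.symm.toLinearMap
  have hR : ∀ z, ‖R z‖ ≤ c⁻¹ * ‖z‖ := fun z ↦ by
    have := hbdd (e.symm z)
    rw [show T (e.symm z) = z from e.apply_symm_apply z] at this
    exact (le_inv_mul_iff₀ hc).2 this
  exact ⟨R.mkContinuous c⁻¹ hR, fun x ↦ congrArg Subtype.val (e.symm_apply_apply x),
    fun z ↦ ⟨(e.symm z).2, e.apply_symm_apply z⟩, R.mkContinuous_norm_le (by positivity) hR⟩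

end Normed

section Hilbert

variable {𝕜 E H : Type*} [RCLike 𝕜] [NormedAddCommGroup E] [NormedSpace 𝕜 E] [CompleteSpace E]
  [NormedAddCommGroup H] [InnerProductSpace 𝕜 H] [CompleteSpace H]

local notation "⟪" x ", " y "⟫" => inner 𝕜 x y

theorem IsClosed.surjective_of_orthogonal_range {T : E →ₗ.[𝕜] H} (hT : T.IsClosed)
    {c : ℝ} (hc : 0 < c) (hbdd : ∀ x : T.domain, c * ‖(x : E)‖ ≤ ‖T x‖)
    (horth : ∀ z : H, (∀ x : T.domain, ⟪z, T x⟫ = 0) → z = 0) : Function.Surjective T := by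
  let K := LinearMap.range T.toFun
  have : CompleteSpace K := by
    have hK : _root_.IsClosed (K : Set H) := by
      rw [LinearMap.coe_range]
      exact hT.isClosed_range hc hbdd
    exact hK.completeSpace_coe
  have hK : Kᗮ = ⊥ := (Submodule.eq_bot_iff _).2 fun z hz ↦
    horth z fun x ↦ (Submodule.mem_orthogonal' K z).1 hz _ (LinearMap.mem_range_self _ x)
  exact LinearMap.range_eq_top.1 (Submodule.orthogonal_eq_bot_iff.1 hK)

theorem _root_.IsSelfAdjoint.isFormalAdjoint_self {D : H →ₗ.[𝕜] H} (hD : IsSelfAdjoint D) :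
    D.IsFormalAdjoint D := by
  have h := adjoint_isFormalAdjoint hD.dense_domain
  rwa [isSelfAdjoint_def.1 hD] at h

theorem _root_.IsSelfAdjoint.exists_vadd_adjoint_eq_zero_of_orthogonal {D : H →ₗ.[𝕜] H}
    (hD : IsSelfAdjoint D) (L : H →L[𝕜] H) {z : H}
    (hz : ∀ x : D.domain, ⟪z, ((L : H →ₗ[𝕜] H) +ᵥ D) x⟫ = 0) :
    ∃ h : z ∈ D.domain, ((L.adjoint : H →ₗ[𝕜] H) +ᵥ D) ⟨z, h⟩ = 0 := by
  have hinner : ∀ x : D.domain, ⟪-L.adjoint z, x⟫ = ⟪z, D x⟫ := fun x ↦ by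
    have := hz x
    rw [vadd_apply, inner_add_right, ContinuousLinearMap.coe_coe] at this
    rw [inner_neg_left, ContinuousLinearMap.adjoint_inner_left]
    linear_combination -this
  have hmem : z ∈ D.adjoint.domain := mem_adjoint_domain_of_exists _ ⟨_, hinner⟩
  have hval := adjoint_apply_eq hD.dense_domain ⟨z, hmem⟩ hinner
  rw [← isSelfAdjoint_def.1 hD]
  exact ⟨hmem, by rw [vadd_apply, hval]; simp⟩

theorem _root_.IsSelfAdjoint.exists_inverse_vadd {D : H →ₗ.[𝕜] H} (hD : IsSelfAdjoint D)
    (L : H →L[𝕜] H) {c : ℝ} (hc : 0 < c)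
    (hL : ∀ x : D.domain, c * ‖(x : H)‖ ≤ ‖((L : H →ₗ[𝕜] H) +ᵥ D) x‖)
    (hL' : ∀ x : D.domain, c * ‖(x : H)‖ ≤ ‖((L.adjoint : H →ₗ[𝕜] H) +ᵥ D) x‖) :
    ∃ R : H →L[𝕜] H, (∀ x : D.domain, R (((L : H →ₗ[𝕜] H) +ᵥ D) x) = x) ∧
      (∀ z : H, ∃ h : R z ∈ D.domain, ((L : H →ₗ[𝕜] H) +ᵥ D) ⟨R z, h⟩ = z) ∧ ‖R‖ ≤ c⁻¹ := by
  refine exists_inverse_of_surjective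
    ((hD.isClosed.vadd L).surjective_of_orthogonal_range hc hL fun z hz ↦ ?_) hc hL
  obtain ⟨h, hz0⟩ := hD.exists_vadd_adjoint_eq_zero_of_orthogonal L hz
  have := hL' ⟨z, h⟩
  rw [hz0, norm_zero] at this
  exact norm_le_zero_iff.1 (nonpos_of_mul_nonpos_right this hc)

end Hilbert

end LinearPMap

section Dirac

open Complex LinearPMap

variable {H : Type*} [NormedAddCommGroup H] [InnerProductSpace ℂ H]

theorem vadd_I_smul_sub_apply (D : H →ₗ.[ℂ] H) (B : H →L[ℂ] H) (y : ℝ) (x : D.domain) :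
    (((I • B - (I * y) • ContinuousLinearMap.id ℂ H : H →L[ℂ] H) : H →ₗ[ℂ] H) +ᵥ D) x =
      D x + I • B x - (I * y) • (x : H) := by
  simp only [vadd_apply, ContinuousLinearMap.coe_coe, _root_.sub_apply,
    _root_.smul_apply, ContinuousLinearMap.id_apply]
  abel

variable [CompleteSpace H]

theorem IsSelfAdjoint.norm_apply_sub_I_mul_smul_sq {D : H →ₗ.[ℂ] H} (hD : IsSelfAdjoint D)
    (y : ℝ) (x : D.domain) :
    ‖D x - (I * y) • (x : H)‖ ^ 2 = ‖D x‖ ^ 2 + y ^ 2 * ‖(x : H)‖ ^ 2 := by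
  have hreal : (inner ℂ (D x) (x : H)).im = 0 := by
    rw [← conj_eq_iff_im, inner_conj_symm, hD.isFormalAdjoint_self x x]
  rw [@norm_sub_sq ℂ, inner_smul_right, norm_smul, mul_pow, norm_mul, norm_I, norm_real,
    Real.norm_eq_abs, one_mul, sq_abs]
  simp [hreal]

theorem IsSelfAdjoint.sub_mul_norm_le_norm_add_I_smul_sub {D : H →ₗ.[ℂ] H}
    (hD : IsSelfAdjoint D) (hDbdd : ∀ x : D.domain, ‖(x : H)‖ ≤ ‖D x‖)
    (B : H →L[ℂ] H) {a : ℝ} (hBa : ‖B‖ ≤ a) (y : ℝ) (x : D.domain) :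
    (√(1 + y ^ 2) - a) * ‖(x : H)‖ ≤ ‖D x + I • B x - (I * y) • (x : H)‖ := by
  have hfree : √(1 + y ^ 2) * ‖(x : H)‖ ≤ ‖D x - (I * y) • (x : H)‖ := by
    rw [← pow_le_pow_iff_left₀ (by positivity) (norm_nonneg _) two_ne_zero, mul_pow,
      Real.sq_sqrt (by positivity), hD.norm_apply_sub_I_mul_smul_sq]
    nlinarith [pow_le_pow_left₀ (norm_nonneg _) (hDbdd x) 2]
  have hpert : ‖I • B x‖ ≤ a * ‖(x : H)‖ := by
    rw [norm_smul, norm_I, one_mul]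
    exact B.le_of_opNorm_le hBa x
  have htri := norm_sub_le (D x + I • B x - (I * y) • (x : H)) (I • B x)
  rw [show D x + I • B x - (I * y) • (x : H) - I • B x = D x - (I * y) • (x : H) by abel] at htri
  linarith

theorem IsSelfAdjoint.adjoint_I_smul_sub {B : H →L[ℂ] H} (hB : IsSelfAdjoint B) (y : ℝ) :
    (I • B - (I * y) • ContinuousLinearMap.id ℂ H).adjoint =
      I • (-B) - (I * (-y : ℝ)) • ContinuousLinearMap.id ℂ H := by
  simp [MulActionSemiHomClass.map_smulₛₗ, hB.adjoint_eq, ContinuousLinearMap.adjoint_id]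

theorem inv_sqrt_one_add_sq_sub_le {a : ℝ} (ha0 : 0 ≤ a) (ha1 : a < 1) (y : ℝ) :
    (√(1 + y ^ 2) - a)⁻¹ ≤ √6 / ((1 - a ^ 2) * √(1 + y ^ 2)) := by
  have hr : 1 ≤ √(1 + y ^ 2) := Real.one_le_sqrt.2 (by nlinarith)
  have h6 : 2 ≤ √6 := Real.le_sqrt_of_sq_le (by norm_num)
  rw [le_div_iff₀ (mul_pos (by nlinarith) (by linarith)), inv_mul_le_iff₀ (by linarith)]
  nlinarith [mul_le_mul_of_nonneg_left h6 (by linarith : 0 ≤ √(1 + y ^ 2) - a)]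

end Dirac

theorem conjugated_dirac_resolvent_bound_general
    {H : Type*} [NormedAddCommGroup H] [InnerProductSpace ℂ H] [CompleteSpace H]
    (D : H →ₗ.[ℂ] H) (hsa : D.adjoint = D)
    (hDsq : ∀ ψ : D.domain, ‖(ψ : H)‖ ≤ ‖D ψ‖)
    (B : H →L[ℂ] H) (hB : IsSelfAdjoint B)
    (a : ℝ) (ha1 : a < 1) (hBa : ‖B‖ ≤ a) :
    ∀ y : ℝ, ∃ R : H →L[ℂ] H,
      (∀ ψ : D.domain,
          R (D ψ + Complex.I • B (ψ : H) - (Complex.I * (y : ℂ)) • (ψ : H)) = ψ)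
      ∧ (∀ φ : H, ∃ h : R φ ∈ D.domain,
          D ⟨R φ, h⟩ + Complex.I • B (R φ) - (Complex.I * (y : ℂ)) • (R φ) = φ)
      ∧ ‖R‖ ≤ Real.sqrt 6 / ((1 - a ^ 2) * Real.sqrt (1 + y ^ 2)) := by
  intro y
  have hD : IsSelfAdjoint D := hsa
  have ha0 : 0 ≤ a := (norm_nonneg B).trans hBa
  have hc : 0 < √(1 + y ^ 2) - a := sub_pos.2 (ha1.trans_le (Real.one_le_sqrt.2 (by nlinarith)))
  obtain ⟨R, hleft, hright, hnorm⟩ := hD.exists_inverse_vadd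
    (Complex.I • B - (Complex.I * y) • ContinuousLinearMap.id ℂ H) hc
    (fun ψ ↦ by
      rw [vadd_I_smul_sub_apply]
      exact hD.sub_mul_norm_le_norm_add_I_smul_sub hDsq B hBa y ψ)
    (fun ψ ↦ by
      rw [hB.adjoint_I_smul_sub, vadd_I_smul_sub_apply, ← neg_sq]
      exact hD.sub_mul_norm_le_norm_add_I_smul_sub hDsq (-B) (by rwa [norm_neg]) (-y) ψ)
  refine ⟨R, fun ψ ↦ ?_, fun φ ↦ ?_, hnorm.trans (inv_sqrt_one_add_sq_sub_le ha0 ha1 y)⟩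
  · simpa only [vadd_I_smul_sub_apply] using hleft ψ
  · simpa only [vadd_I_smul_sub_apply] using hright φ

/-- Let `D_F = D + iB` where `D` is self-adjoint with `D² ≥ 1` and `B` is
a bounded self-adjoint operator with `‖B‖ ≤ a < 1`, such that
`(D + iB)*(D + iB) ≥ (1 − a²)·1` and similarly for the adjoint `D − iB`. Then for every
`y ∈ ℝ`, `iy` belongs to the resolvent set of `D + iB` and
`‖(D + iB − iy)⁻¹‖ ≤ √6 / ((1 − a²) √(1 + y²))`. -/
theorem conjugated_dirac_resolvent_bound
    {H : Type*} [NormedAddCommGroup H] [InnerProductSpace ℂ H] [CompleteSpace H]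
    (D : H →ₗ.[ℂ] H) (hdense : Dense (D.domain : Set H)) (hsa : D.adjoint = D)
    (hDsq : ∀ ψ : D.domain, ‖(ψ : H)‖ ≤ ‖D ψ‖)
    (B : H →L[ℂ] H) (hB : IsSelfAdjoint B)
    (a : ℝ) (ha0 : 0 ≤ a) (ha1 : a < 1) (hBa : ‖B‖ ≤ a)
    (hlow : ∀ ψ : D.domain,
        Real.sqrt (1 - a ^ 2) * ‖(ψ : H)‖ ≤ ‖D ψ + Complex.I • B (ψ : H)‖)
    (hlow' : ∀ ψ : D.domain,
        Real.sqrt (1 - a ^ 2) * ‖(ψ : H)‖ ≤ ‖D ψ - Complex.I • B (ψ : H)‖) :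
    ∀ y : ℝ, ∃ R : H →L[ℂ] H,
      (∀ ψ : D.domain,
          R (D ψ + Complex.I • B (ψ : H) - (Complex.I * (y : ℂ)) • (ψ : H)) = ψ)
      ∧ (∀ φ : H, ∃ h : R φ ∈ D.domain,
          D ⟨R φ, h⟩ + Complex.I • B (R φ) - (Complex.I * (y : ℂ)) • (R φ) = φ)
      ∧ ‖R‖ ≤ Real.sqrt 6 / ((1 - a ^ 2) * Real.sqrt (1 + y ^ 2)) :=
  conjugated_dirac_resolvent_bound_general D hsa hDsq B hB a ha1 hBa
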